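/- For every z > 0 and μ ≥ 0, the upper-tail integral of the quasi-Cauchy prior against the shifted normal density satisfies ∫_μ^∞ γ(u) φ(z − u) du = (2π)^{-1/2} z^{-2} { Φ̃(μ − z) − z φ(μ − z) + (μz − 1) e^{μz − z²/2} Φ̃(μ) }; equivalently, the conditional tail probability F̃₁(μ | z) = (∫_μ^∞ γ(u) φ(z − u) du)/(∫_ℝ γ(u) φ(z − u) du) equals (1 − e^{-z²/2})^{-1} { Φ̃(μ − z) − z φ(μ − z) + (μz − 1) e^{μz − z²/2} Φ̃(μ) }. -/

import Mathlib

open MeasureTheory Real Filter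

/-- The standard normal density. -/
noncomputable def phi (x : ℝ) : ℝ := (Real.sqrt (2 * Real.pi))⁻¹ * Real.exp (-x ^ 2 / 2)

/-- The standard normal cumulative distribution function. -/
noncomputable def Phi (x : ℝ) : ℝ := ∫ t in Set.Iic x, phi t

/-- The upper tail of the standard normal distribution. -/
noncomputable def PhiBar (x : ℝ) : ℝ := 1 - Phi x

/-- The quasi-Cauchy density. -/
noncomputable def quasiCauchy (u : ℝ) : ℝ :=
  (Real.sqrt (2 * Real.pi))⁻¹ * (1 - |u| * PhiBar |u| / phi u)

lemma sqrt2pi_pos : 0 < Real.sqrt (2 * Real.pi) :=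
  Real.sqrt_pos.2 (by positivity)

lemma phi_pos (x : ℝ) : 0 < phi x := by
  unfold phi
  positivity

lemma phi_even (x : ℝ) : phi (-x) = phi x := by simp [phi]

lemma phi_shift (u z : ℝ) : Real.exp (u * z - z ^ 2 / 2) * phi u = phi (u - z) := by
  unfold phi
  rw [mul_left_comm, ← Real.exp_add]
  ring_nf

lemma integrable_phi : Integrable phi := by
  have h : Integrable (fun x : ℝ => Real.exp (-(1/2 : ℝ) * x ^ 2)) :=
    integrable_exp_neg_mul_sq (by norm_num)
  have := h.const_mul (Real.sqrt (2 * Real.pi))⁻¹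
  refine this.congr (Eventually.of_forall fun x => ?_)
  unfold phi
  ring_nf

lemma integral_phi : ∫ x, phi x = 1 := by
  have h : ∫ x : ℝ, Real.exp (-(1/2 : ℝ) * x ^ 2) = Real.sqrt (Real.pi / (1/2)) :=
    integral_gaussian (1/2)
  have : ∫ x, phi x = (Real.sqrt (2 * Real.pi))⁻¹ * ∫ x : ℝ, Real.exp (-(1/2 : ℝ) * x ^ 2) := by
    rw [← integral_const_mul]
    congr 1 with x
    unfold phi
    ring_nf
  rw [this, h]
  rw [show Real.pi / (1/2) = 2 * Real.pi by ring]
  exact inv_mul_cancel₀ (ne_of_gt sqrt2pi_pos)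

lemma continuous_phi : Continuous phi := by unfold phi; fun_prop

lemma hasDerivAt_phi (x : ℝ) : HasDerivAt phi (-x * phi x) x := by
  have h1 : HasDerivAt (fun x : ℝ => -x ^ 2 / 2) (-x) x := by
    have := ((hasDerivAt_pow 2 x).neg).div_const 2
    refine this.congr_deriv ?_
    push_cast; ring
  have h2 := (h1.exp).const_mul (Real.sqrt (2 * Real.pi))⁻¹
  refine h2.congr_deriv ?_
  unfold phi; ring

lemma Phi_eq (x : ℝ) : Phi x = Phi 0 + ∫ t in (0:ℝ)..x, phi t := by
  have := intervalIntegral.integral_Iic_sub_Iic (μ := volume)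
    (integrable_phi.integrableOn (s := Set.Iic 0)) (integrable_phi.integrableOn (s := Set.Iic x))
  unfold Phi
  linarith [this]

lemma hasDerivAt_Phi (x : ℝ) : HasDerivAt Phi (phi x) x := by
  have h : HasDerivAt (fun u => ∫ t in (0:ℝ)..u, phi t) (phi x) x :=
    intervalIntegral.integral_hasDerivAt_right
      (integrable_phi.intervalIntegrable)
      (continuous_phi.stronglyMeasurableAtFilter _ _)
      continuous_phi.continuousAt
  have := (h.const_add (Phi 0))
  refine HasDerivAt.congr_of_eventuallyEq this ?_
  filter_upwards with y using (Phi_eq y)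

lemma continuous_Phi : Continuous Phi := by
  have : Differentiable ℝ Phi := fun x => (hasDerivAt_Phi x).differentiableAt
  exact this.continuous

lemma PhiBar_eq (x : ℝ) : PhiBar x = ∫ t in Set.Ioi x, phi t := by
  have := intervalIntegral.integral_Iic_add_Ioi (μ := volume) (b := x)
    (integrable_phi.integrableOn) (integrable_phi.integrableOn)
  unfold PhiBar Phi
  rw [← integral_phi]
  linarith [this]

lemma PhiBar_nonneg (x : ℝ) : 0 ≤ PhiBar x := by
  rw [PhiBar_eq]
  exact setIntegral_nonneg measurableSet_Ioi (fun t _ => (phi_pos t).le)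

lemma tendsto_phi_atTop : Tendsto phi atTop (nhds 0) := by
  have h1 : Tendsto (fun t : ℝ => -t ^ 2 / 2) atTop atBot := by
    have h : Tendsto (fun t : ℝ => t ^ 2 / 2) atTop atTop :=
      (tendsto_pow_atTop (two_ne_zero)).atTop_div_const (by norm_num)
    have := tendsto_neg_atTop_atBot.comp h
    refine this.congr fun t => by simp [Function.comp]; ring
  have h2 := (Real.tendsto_exp_atBot.comp h1).const_mul (Real.sqrt (2 * Real.pi))⁻¹
  rw [mul_zero] at h2
  exact h2.congr fun t => rfl

lemma integrable_mul_phi : Integrable (fun t : ℝ => t * phi t) := by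
  have h : Integrable (fun t : ℝ => t * ((Real.sqrt (2 * Real.pi))⁻¹ * Real.exp (-(1/2:ℝ) * t ^ 2))) :=
    ((integrable_mul_exp_neg_mul_sq (by norm_num : (0:ℝ) < 1/2)).const_mul
      (Real.sqrt (2 * Real.pi))⁻¹).congr (Eventually.of_forall fun t => by ring)
  refine h.congr (Eventually.of_forall fun t => ?_)
  unfold phi; ring_nf

lemma integral_Ioi_mul_phi (x : ℝ) : ∫ t in Set.Ioi x, t * phi t = phi x := by
  have hderiv : ∀ t ∈ Set.Ici x, HasDerivAt (fun t => -phi t) (t * phi t) t := by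
    intro t _
    exact ((hasDerivAt_phi t).neg).congr_deriv (by ring)
  have hlim : Tendsto (fun t => -phi t) atTop (nhds 0) := by
    rw [← neg_zero]; exact tendsto_phi_atTop.neg
  have := integral_Ioi_of_hasDerivAt_of_tendsto' hderiv integrable_mul_phi.integrableOn hlim
  simpa using this

lemma mills {u : ℝ} (hu : 0 ≤ u) : u * PhiBar u ≤ phi u := by
  rw [PhiBar_eq, ← integral_Ioi_mul_phi u, ← integral_const_mul]
  refine setIntegral_mono_on (integrable_phi.integrableOn.const_mul u)
    integrable_mul_phi.integrableOn measurableSet_Ioi ?_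
  intro t ht
  have : u ≤ t := le_of_lt ht
  nlinarith [phi_pos t]

lemma tendsto_PhiBar_atTop : Tendsto PhiBar atTop (nhds 0) := by
  refine squeeze_zero' (Eventually.of_forall PhiBar_nonneg) ?_ tendsto_phi_atTop
  filter_upwards [eventually_ge_atTop (1:ℝ)] with x hx
  calc PhiBar x ≤ x * PhiBar x := le_mul_of_one_le_left (PhiBar_nonneg x) hx
  _ ≤ phi x := mills (by linarith)

lemma tendsto_Phi_atTop : Tendsto Phi atTop (nhds 1) := by
  have := tendsto_PhiBar_atTop
  have h : Tendsto (fun x => 1 - PhiBar x) atTop (nhds (1 - 0)) := (tendsto_const_nhds).sub this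
  simpa [PhiBar] using h

lemma phi_abs (u : ℝ) : phi |u| = phi u := by
  rcases abs_choice u with h | h <;> rw [h]
  exact phi_even u

lemma quasiCauchy_nonneg (u : ℝ) : 0 ≤ quasiCauchy u := by
  unfold quasiCauchy
  have h := mills (abs_nonneg u)
  rw [phi_abs] at h
  have h2 := phi_pos u
  have : |u| * PhiBar |u| / phi u ≤ 1 := by
    rw [div_le_one h2]; exact h
  have h3 : (0:ℝ) ≤ 1 - |u| * PhiBar |u| / phi u := by linarith
  have := sqrt2pi_pos
  positivity

lemma quasiCauchy_le (u : ℝ) : quasiCauchy u ≤ (Real.sqrt (2 * Real.pi))⁻¹ := by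
  unfold quasiCauchy
  have h2 := phi_pos u
  have hnn : 0 ≤ |u| * PhiBar |u| / phi u :=
    div_nonneg (mul_nonneg (abs_nonneg u) (PhiBar_nonneg _)) h2.le
  nlinarith [sqrt2pi_pos, inv_pos.2 sqrt2pi_pos]

lemma continuous_quasiCauchy : Continuous quasiCauchy := by
  unfold quasiCauchy PhiBar
  have : Continuous fun u : ℝ => |u| * (1 - Phi |u|) / phi u :=
    (continuous_abs.mul ((continuous_const.sub (continuous_Phi.comp continuous_abs)))).div
      continuous_phi fun x => (phi_pos x).ne'
  fun_prop

lemma integrable_integrand (z : ℝ) : Integrable (fun u => quasiCauchy u * phi (z - u)) := by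
  have hb : Integrable (fun u : ℝ => (Real.sqrt (2 * Real.pi))⁻¹ * phi (z - u)) := by
    have h := (integrable_phi.comp_neg).comp_sub_right z
    have : Integrable (fun u : ℝ => phi (z - u)) := by
      refine h.congr (Eventually.of_forall fun u => ?_)
      simp only [neg_sub]
    exact this.const_mul _
  refine hb.mono' ?_ (Eventually.of_forall fun u => ?_)
  · exact (continuous_quasiCauchy.mul (continuous_phi.comp (continuous_const.sub continuous_id))).aestronglyMeasurable
  · rw [Real.norm_eq_abs, abs_mul, abs_of_nonneg (quasiCauchy_nonneg u),
      abs_of_nonneg (phi_pos _).le]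
    exact mul_le_mul_of_nonneg_right (quasiCauchy_le u) (phi_pos _).le

lemma hasDerivAt_PhiBar (x : ℝ) : HasDerivAt PhiBar (-phi x) x := by
  have := (hasDerivAt_Phi x).const_sub 1
  exact this

lemma integrand_eq {z u : ℝ} (hu : 0 ≤ u) :
    quasiCauchy u * phi (z - u)
      = (Real.sqrt (2 * Real.pi))⁻¹ *
          (phi (u - z) - u * PhiBar u * Real.exp (u * z - z ^ 2 / 2)) := by
  unfold quasiCauchy
  rw [abs_of_nonneg hu]
  have h1 : phi (z - u) = phi (u - z) := by rw [← phi_even (u - z), neg_sub]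
  rw [h1, ← phi_shift u z]
  field_simp [(phi_pos u).ne']

noncomputable def Fk (z u : ℝ) : ℝ :=
  (Real.sqrt (2 * Real.pi))⁻¹ * (z ^ 2)⁻¹ *
    (Phi (u - z) + z * phi (u - z) - (u * z - 1) * Real.exp (u * z - z ^ 2 / 2) * PhiBar u)

lemma hasDerivAt_Fk (z : ℝ) (hz : z ≠ 0) (u : ℝ) :
    HasDerivAt (Fk z)
      ((Real.sqrt (2 * Real.pi))⁻¹ *
        (phi (u - z) - u * PhiBar u * Real.exp (u * z - z ^ 2 / 2))) u := by
  have hsub : HasDerivAt (fun u : ℝ => u - z) 1 u := (hasDerivAt_id u).sub_const z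
  have h1 : HasDerivAt (fun u => Phi (u - z)) (phi (u - z)) u := by
    have := (hasDerivAt_Phi (u - z)).comp u hsub
    exact this.congr_deriv (mul_one _)
  have h2 : HasDerivAt (fun u => phi (u - z)) (-(u - z) * phi (u - z)) u := by
    have := (hasDerivAt_phi (u - z)).comp u hsub
    exact this.congr_deriv (mul_one _)
  have h3 : HasDerivAt (fun u : ℝ => u * z - 1) z u := by
    simpa using (hasDerivAt_id u).mul_const z |>.sub_const 1
  have h4 : HasDerivAt (fun u : ℝ => Real.exp (u * z - z ^ 2 / 2))
      (z * Real.exp (u * z - z ^ 2 / 2)) u := by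
    have hlin : HasDerivAt (fun u : ℝ => u * z - z ^ 2 / 2) z u := by
      simpa using (hasDerivAt_id u).mul_const z |>.sub_const (z ^ 2 / 2)
    simpa [mul_comm] using hlin.exp
  have h5 := ((h3.mul h4).mul (hasDerivAt_PhiBar u))
  have h6 := ((h1.add (h2.const_mul z)).sub h5).const_mul
    ((Real.sqrt (2 * Real.pi))⁻¹ * (z ^ 2)⁻¹)
  refine h6.congr_deriv ?_
  rw [← phi_shift u z]
  simp only [Pi.mul_apply]
  field_simp
  ring

lemma tendsto_Fk (z : ℝ) (hz : z ≠ 0) :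
    Tendsto (Fk z) atTop (nhds ((Real.sqrt (2 * Real.pi))⁻¹ * (z ^ 2)⁻¹)) := by
  have hshift : Tendsto (fun u : ℝ => u - z) atTop atTop :=
    tendsto_atTop_add_const_right _ (-z) tendsto_id
  have t1 : Tendsto (fun u => Phi (u - z)) atTop (nhds 1) := tendsto_Phi_atTop.comp hshift
  have tphi : Tendsto (fun u => phi (u - z)) atTop (nhds 0) := tendsto_phi_atTop.comp hshift
  have t2 : Tendsto (fun u => z * phi (u - z)) atTop (nhds 0) := by
    have := tphi.const_mul z
    simpa using this
  have t3 : Tendsto (fun u => (u * z - 1) * Real.exp (u * z - z ^ 2 / 2) * PhiBar u)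
      atTop (nhds 0) := by
    have tb : Tendsto (fun u => (|z| + 1) * phi (u - z)) atTop (nhds 0) := by
      have := tphi.const_mul (|z| + 1)
      simpa using this
    refine squeeze_zero_norm' ?_ tb
    filter_upwards [eventually_ge_atTop (1:ℝ)] with u hu
    have hu0 : (0:ℝ) < u := by linarith
    have hm : u * PhiBar u ≤ phi u := mills hu0.le
    have hPB : 0 ≤ PhiBar u := PhiBar_nonneg u
    have hexp : (0:ℝ) < Real.exp (u * z - z ^ 2 / 2) := Real.exp_pos _
    have habs : |(u * z - 1) * Real.exp (u * z - z ^ 2 / 2) * PhiBar u|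
        ≤ (u * (|z| + 1)) * Real.exp (u * z - z ^ 2 / 2) * PhiBar u := by
      rw [abs_mul, abs_mul, abs_of_nonneg hexp.le, abs_of_nonneg hPB]
      have : |u * z - 1| ≤ u * (|z| + 1) := by
        have h1 : |u * z - 1| ≤ |u * z| + 1 := by
          calc |u * z - 1| ≤ |u * z| + |(1:ℝ)| := abs_sub _ _
          _ = |u * z| + 1 := by norm_num
        have h2 : |u * z| = u * |z| := by rw [abs_mul, abs_of_nonneg hu0.le]
        nlinarith
      exact mul_le_mul_of_nonneg_right (mul_le_mul_of_nonneg_right this hexp.le) hPB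
    rw [Real.norm_eq_abs]
    refine habs.trans ?_
    rw [← phi_shift u z]
    have : u * (|z| + 1) * Real.exp (u * z - z ^ 2 / 2) * PhiBar u
        = (|z| + 1) * Real.exp (u * z - z ^ 2 / 2) * (u * PhiBar u) := by ring
    rw [this]
    have hc : 0 ≤ (|z| + 1) * Real.exp (u * z - z ^ 2 / 2) := by positivity
    calc (|z| + 1) * Real.exp (u * z - z ^ 2 / 2) * (u * PhiBar u)
        ≤ (|z| + 1) * Real.exp (u * z - z ^ 2 / 2) * phi u := by nlinarith
      _ = (|z| + 1) * (Real.exp (u * z - z ^ 2 / 2) * phi u) := by ring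
  have := (((t1.add t2).sub t3).const_mul ((Real.sqrt (2 * Real.pi))⁻¹ * (z ^ 2)⁻¹))
  have heq : (1:ℝ) + 0 - 0 = 1 := by norm_num
  rw [heq, mul_one] at this
  exact this

lemma key (z μ : ℝ) (hz : z ≠ 0) (hμ : 0 ≤ μ) :
    (∫ u in Set.Ici μ, quasiCauchy u * phi (z - u))
      = (Real.sqrt (2 * Real.pi))⁻¹ * (z ^ 2)⁻¹ *
          (PhiBar (μ - z) - z * phi (μ - z) +
            (μ * z - 1) * Real.exp (μ * z - z ^ 2 / 2) * PhiBar μ) := by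
  rw [MeasureTheory.integral_Ici_eq_integral_Ioi]
  set g : ℝ → ℝ := fun u => (Real.sqrt (2 * Real.pi))⁻¹ *
      (phi (u - z) - u * PhiBar u * Real.exp (u * z - z ^ 2 / 2)) with hg
  have hcongr : ∀ u ∈ Set.Ioi μ, quasiCauchy u * phi (z - u) = g u := fun u hu =>
    integrand_eq (le_trans hμ (le_of_lt hu))
  rw [setIntegral_congr_fun measurableSet_Ioi hcongr]
  have hint : IntegrableOn g (Set.Ioi μ) :=
    ((integrable_integrand z).integrableOn).congr_fun hcongr measurableSet_Ioi
  have := integral_Ioi_of_hasDerivAt_of_tendsto'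
    (fun u _ => hasDerivAt_Fk z hz u) hint (tendsto_Fk z hz)
  rw [this]
  unfold Fk PhiBar
  ring

lemma quasiCauchy_even (u : ℝ) : quasiCauchy (-u) = quasiCauchy u := by
  unfold quasiCauchy
  rw [abs_neg, phi_even]

lemma Phi_add_Phi_neg (x : ℝ) : Phi x + Phi (-x) = 1 := by
  have h := integral_comp_neg_Iic (-x) phi
  rw [neg_neg] at h
  have h2 : (∫ t in Set.Iic (-x), phi (-t)) = ∫ t in Set.Iic (-x), phi t :=
    setIntegral_congr_fun measurableSet_Iic fun t _ => phi_even t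
  have h3 : Phi (-x) = ∫ t in Set.Ioi x, phi t := by
    unfold Phi; rw [← h2, h]
  have h4 := intervalIntegral.integral_Iic_add_Ioi (μ := volume) (b := x)
    (integrable_phi.integrableOn) (integrable_phi.integrableOn)
  rw [integral_phi] at h4
  unfold Phi at h3 ⊢
  rw [h3]
  linarith

lemma Phi_zero : Phi 0 = 1/2 := by
  have := Phi_add_Phi_neg 0
  rw [neg_zero] at this
  linarith

lemma total (z : ℝ) (hz : z ≠ 0) :
    (∫ u : ℝ, quasiCauchy u * phi (z - u))
      = (Real.sqrt (2 * Real.pi))⁻¹ * (z ^ 2)⁻¹ * (1 - Real.exp (-z ^ 2 / 2)) := by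
  have hint := integrable_integrand z
  rw [← intervalIntegral.integral_Iic_add_Ioi (b := 0) hint.integrableOn hint.integrableOn]
  have hleft : (∫ u in Set.Iic (0:ℝ), quasiCauchy u * phi (z - u))
      = ∫ u in Set.Ioi (0:ℝ), quasiCauchy u * phi (-z - u) := by
    have h := integral_comp_neg_Ioi (0:ℝ) (fun x => quasiCauchy x * phi (z - x))
    rw [neg_zero] at h
    rw [← h]
    refine setIntegral_congr_fun measurableSet_Ioi fun u _ => ?_
    show quasiCauchy (-u) * phi (z - -u) = quasiCauchy u * phi (-z - u)
    rw [quasiCauchy_even, sub_neg_eq_add, show -z - u = -(z + u) by ring, phi_even]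
  rw [hleft]
  have k1 := key z 0 hz le_rfl
  have k2 := key (-z) 0 (neg_ne_zero.2 hz) le_rfl
  rw [MeasureTheory.integral_Ici_eq_integral_Ioi] at k1 k2
  rw [k2, k1]
  have e1 : phi (0 - -z) = phi (0 - z) := by rw [show (0:ℝ) - -z = -(0 - z) by ring, phi_even]
  have e2 : PhiBar (0 - -z) + PhiBar (0 - z) = 1 := by
    unfold PhiBar
    have := Phi_add_Phi_neg (0 - z)
    rw [show (0:ℝ) - -z = -(0 - z) by ring]
    linarith
  have e3 : PhiBar 0 = 1/2 := by unfold PhiBar; rw [Phi_zero]; norm_num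
  have e4 : (-z)^2 = z^2 := by ring
  rw [e4, e3, e1]
  rw [show (0:ℝ) * -z - (z^2)/2 = -z^2/2 by ring, show (0:ℝ) * z - z^2/2 = -z^2/2 by ring]
  linear_combination ((Real.sqrt (2*Real.pi))⁻¹ * (z^2)⁻¹) * e2


/-- Upper-tail integral of the quasi-Cauchy prior against the shifted normal density,
and the resulting conditional tail probability `F̃₁(μ | z)`. -/
theorem quasiCauchy_tail_integral (z μ : ℝ) (hz : 0 < z) (hμ : 0 ≤ μ) :
    (∫ u in Set.Ici μ, quasiCauchy u * phi (z - u))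
        = (Real.sqrt (2 * Real.pi))⁻¹ * (z ^ 2)⁻¹ *
            (PhiBar (μ - z) - z * phi (μ - z) +
              (μ * z - 1) * Real.exp (μ * z - z ^ 2 / 2) * PhiBar μ) ∧
    (∫ u in Set.Ici μ, quasiCauchy u * phi (z - u)) /
        (∫ u : ℝ, quasiCauchy u * phi (z - u))
        = (1 - Real.exp (-z ^ 2 / 2))⁻¹ *
            (PhiBar (μ - z) - z * phi (μ - z) +
              (μ * z - 1) * Real.exp (μ * z - z ^ 2 / 2) * PhiBar μ) := by
  have hz' : z ≠ 0 := ne_of_gt hz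
  refine ⟨key z μ hz' hμ, ?_⟩
  rw [key z μ hz' hμ, total z hz']
  have hC : (Real.sqrt (2 * Real.pi))⁻¹ * (z ^ 2)⁻¹ ≠ 0 := by
    have := sqrt2pi_pos
    positivity
  rw [mul_div_mul_left _ _ hC, div_eq_inv_mul]
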